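/- arXiv:2012.12371 — 6 statements merged into one kernel-verified Lean document; each statement's English description precedes it below -/
import Mathlib

section
/- Let b, Γ₁, Γ₂ be real numbers with Γ₂² < Γ₁. Then for every ξ ∈ ℝ the discriminant D(ξ) = (b − ξ)² + 4(Γ₁ + (ξ − b)Γ₂) is positive, and both functions μ₋(ξ) = (b − ξ − √D(ξ))/2 and μ₊(ξ) = (b − ξ + √D(ξ))/2 are strictly decreasing (strictly antitone) functions of ξ on ℝ. -/
private lemma key_ineqs (c u₁ u₂ s₁ s₂ : ℝ) (hc : 0 < c) (hu : u₁ < u₂)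
    (hs₁ : 0 ≤ s₁) (hs₂ : 0 ≤ s₂) (e₁ : s₁^2 = u₁^2 + c) (e₂ : s₂^2 = u₂^2 + c) :
    u₁ + s₁ < u₂ + s₂ ∧ u₁ - s₁ < u₂ - s₂ := by
  have hA : |u₁| < s₁ := by nlinarith [sq_abs u₁, abs_nonneg u₁]
  have hB : |u₂| < s₂ := by nlinarith [sq_abs u₂, abs_nonneg u₂]
  have hu' : 0 < u₂ - u₁ := sub_pos.2 hu
  have hs12 : 0 < s₁ + s₂ := by linarith [abs_nonneg u₁, abs_nonneg u₂]
  have hp1 : 0 < s₁ + s₂ + u₁ + u₂ := by linarith [neg_abs_le u₁, neg_abs_le u₂]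
  have hp2 : 0 < s₁ + s₂ - u₁ - u₂ := by linarith [le_abs_self u₁, le_abs_self u₂]
  constructor
  · nlinarith [mul_pos hu' hp1]
  · nlinarith [mul_pos hu' hp2]

/-- if `Γ₂² < Γ₁`, the discriminant `D(ξ)` is everywhere positive and
both roots `μ∓(ξ)` of the quadratic are strictly decreasing in `ξ`. -/
theorem roots_strictly_decreasing
    (b Γ₁ Γ₂ : ℝ) (h : Γ₂^2 < Γ₁) :
    (∀ ξ : ℝ, 0 < (b - ξ)^2 + 4*(Γ₁ + (ξ - b)*Γ₂)) ∧
    StrictAnti (fun ξ : ℝ =>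
      (b - ξ - Real.sqrt ((b - ξ)^2 + 4*(Γ₁ + (ξ - b)*Γ₂)))/2) ∧
    StrictAnti (fun ξ : ℝ =>
      (b - ξ + Real.sqrt ((b - ξ)^2 + 4*(Γ₁ + (ξ - b)*Γ₂)))/2) := by
  have hc : 0 < 4*(Γ₁ - Γ₂^2) := by linarith
  have key : ∀ ξ₁ ξ₂ : ℝ, ξ₁ < ξ₂ →
      ((b - ξ₂) - Real.sqrt ((b - ξ₂)^2 + 4*(Γ₁ + (ξ₂ - b)*Γ₂))
        < (b - ξ₁) - Real.sqrt ((b - ξ₁)^2 + 4*(Γ₁ + (ξ₁ - b)*Γ₂))) ∧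
      ((b - ξ₂) + Real.sqrt ((b - ξ₂)^2 + 4*(Γ₁ + (ξ₂ - b)*Γ₂))
        < (b - ξ₁) + Real.sqrt ((b - ξ₁)^2 + 4*(Γ₁ + (ξ₁ - b)*Γ₂))) := by
    intro ξ₁ ξ₂ hlt
    set u₁ : ℝ := b - ξ₂ - 2*Γ₂ with hu₁
    set u₂ : ℝ := b - ξ₁ - 2*Γ₂ with hu₂
    set c : ℝ := 4*(Γ₁ - Γ₂^2) with hcdef
    have hr₁ : (b - ξ₂)^2 + 4*(Γ₁ + (ξ₂ - b)*Γ₂) = u₁^2 + c := by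
      simp only [hu₁, hcdef]; ring
    have hr₂ : (b - ξ₁)^2 + 4*(Γ₁ + (ξ₁ - b)*Γ₂) = u₂^2 + c := by
      simp only [hu₂, hcdef]; ring
    rw [hr₁, hr₂]
    have hnn₁ : (0:ℝ) ≤ u₁^2 + c := by positivity
    have hnn₂ : (0:ℝ) ≤ u₂^2 + c := by positivity
    have := key_ineqs c u₁ u₂ (Real.sqrt (u₁^2 + c)) (Real.sqrt (u₂^2 + c)) hc
      (by simp only [hu₁, hu₂]; linarith) (Real.sqrt_nonneg _) (Real.sqrt_nonneg _)
      (Real.sq_sqrt hnn₁) (Real.sq_sqrt hnn₂)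
    constructor
    · have := this.2
      simp only [hu₁, hu₂] at this ⊢; linarith
    · have := this.1
      simp only [hu₁, hu₂] at this ⊢; linarith
  refine ⟨fun ξ => by nlinarith [sq_nonneg (b - ξ - 2*Γ₂)], ?_, ?_⟩
  · intro ξ₁ ξ₂ hlt
    have := (key ξ₁ ξ₂ hlt).1
    simp only
    linarith
  · intro ξ₁ ξ₂ hlt
    have := (key ξ₁ ξ₂ hlt).2
    simp only
    linarith
end

section
/- Let a > 0 and b, Γ₁, Γ₂ be real numbers with b + 2a < −1, b + 2a < Γ₂ < −1, 1 < Γ₁ < (b+2a)², and Γ₂² < Γ₁. Set ξ₀ = b + (Γ₁ − (b+2a)²)/(b + 2a − Γ₂) and ξ_cr = b + (1 − Γ₁)/(1 + Γ₂). Then for every ξ with ξ_cr < ξ < ξ₀, both roots μ₋(ξ) and μ₊(ξ) lie in the open interval (b+2a, −1). -/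
/-- for `ξ` strictly between the critical slopes `ξ_cr` and `ξ₀`, both
roots `μ∓(ξ)` lie in the open spectral gap `(b+2a, −1)`. -/
theorem roots_in_gap
    (a b Γ₁ Γ₂ : ℝ) (ha : 0 < a) (hgap : b + 2*a < -1)
    (hΓ₂l : b + 2*a < Γ₂) (hΓ₂r : Γ₂ < -1)
    (hΓ₁l : 1 < Γ₁) (hΓ₁r : Γ₁ < (b + 2*a)^2)
    (hCS : Γ₂^2 < Γ₁) :
    ∀ ξ : ℝ,
      b + (1 - Γ₁)/(1 + Γ₂) < ξ →
      ξ < b + (Γ₁ - (b + 2*a)^2)/(b + 2*a - Γ₂) →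
      (b - ξ - Real.sqrt ((b - ξ)^2 + 4*(Γ₁ + (ξ - b)*Γ₂)))/2
        ∈ Set.Ioo (b + 2*a) (-1 : ℝ) ∧
      (b - ξ + Real.sqrt ((b - ξ)^2 + 4*(Γ₁ + (ξ - b)*Γ₂)))/2
        ∈ Set.Ioo (b + 2*a) (-1 : ℝ) := by
  intro ξ h1 h2
  set B := b + 2*a with hB
  set t := ξ - b with ht
  have h1Γ : (1 : ℝ) + Γ₂ < 0 := by linarith
  have h2Γ : B - Γ₂ < 0 := by linarith
  -- translate the hypotheses on ξ into product form
  have hcr : t * (1 + Γ₂) < 1 - Γ₁ := by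
    have := (div_lt_iff_of_neg h1Γ).mp (by linarith : (1 - Γ₁)/(1 + Γ₂) < t)
    linarith
  have h0 : Γ₁ - B^2 < t * (B - Γ₂) := by
    have := (lt_div_iff_of_neg h2Γ).mp (by linarith : t < (Γ₁ - B^2)/(B - Γ₂))
    linarith
  have ht2 : 2 < t := by nlinarith [sq_nonneg (Γ₂ + 1)]
  have htB : t < -(2*B) := by nlinarith [sq_nonneg (Γ₂ - B)]
  set D : ℝ := (b - ξ)^2 + 4*(Γ₁ + (ξ - b)*Γ₂) with hD
  have hDval : D = t^2 + 4*Γ₂*t + 4*Γ₁ := by rw [hD, ht]; ring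
  have hDpos : 0 < D := by nlinarith [sq_nonneg (t + 2*Γ₂)]
  have hs0 : 0 ≤ Real.sqrt D := Real.sqrt_nonneg D
  -- √D < t - 2
  have hs1 : Real.sqrt D < t - 2 := by
    rw [show Real.sqrt D < t - 2 ↔ D < (t - 2)^2 from Real.sqrt_lt' (by linarith)]
    nlinarith
  -- √D < -(t + 2*B)
  have hs2 : Real.sqrt D < -(t + 2*B) := by
    rw [show Real.sqrt D < -(t + 2*B) ↔ D < (-(t + 2*B))^2 from Real.sqrt_lt' (by linarith)]
    nlinarith
  constructor
  · constructor
    · show B < (b - ξ - Real.sqrt D)/2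
      have : Real.sqrt D < b - ξ - 2*B := by rw [ht] at hs2; linarith
      linarith
    · show (b - ξ - Real.sqrt D)/2 < -1
      have : b - ξ = -t := by rw [ht]; ring
      linarith
  · constructor
    · show B < (b - ξ + Real.sqrt D)/2
      have : b - ξ = -t := by rw [ht]; ring
      linarith
    · show (b - ξ + Real.sqrt D)/2 < -1
      have : b - ξ = -t := by rw [ht]; ring
      linarith
end

section
/- For every μ₀ with b + 2a < μ₀ < −1, the weighted averages satisfy the strict inequality (∫_{μ₀}^{−1} λ·w(λ) dλ) / (∫_{μ₀}^{−1} w(λ) dλ) > (∫_{b+2a}^{−1} λ·w(λ) dλ) / (∫_{b+2a}^{−1} w(λ) dλ); here both denominators are positive. -/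
open MeasureTheory

/-- The weight `w(λ) = ((λ² − 1)((λ − b)² − 4a²))^(−1/2)` on the spectral gap. -/
noncomputable def todaWeight (a b : ℝ) : ℝ → ℝ :=
  fun x => ((x^2 - 1) * ((x - b)^2 - 4*a^2)) ^ ((-1 : ℝ)/2)

lemma todaWeight_pos {a b : ℝ} (ha : 0 < a) (hgap : b + 2*a < -1)
    {x : ℝ} (hx : x ∈ Set.Ioo (b + 2*a) (-1 : ℝ)) : 0 < todaWeight a b x := by
  obtain ⟨h1, h2⟩ := hx
  have hx1 : 0 < x^2 - 1 := by
    nlinarith [mul_pos (show 0 < -(x+1) by linarith) (show 0 < -(x-1) by linarith)]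
  have hx2 : 0 < (x - b)^2 - 4*a^2 := by
    nlinarith [mul_pos (show 0 < x - b - 2*a by linarith) (show 0 < x - b + 2*a by linarith)]
  exact Real.rpow_pos_of_pos (by positivity) _

/-- mean value comparison of weighted averages over `[μ₀, −1]` and over
the whole gap `[b+2a, −1]`. -/
theorem weighted_average_comparison
    (a b : ℝ) (ha : 0 < a) (hgap : b + 2*a < -1)
    (hw : IntervalIntegrable (todaWeight a b) volume (b + 2*a) (-1))
    (hw1 : IntervalIntegrable (fun x => x * todaWeight a b x) volume (b + 2*a) (-1)) :
    ∀ μ₀ ∈ Set.Ioo (b + 2*a) (-1 : ℝ),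
      (0 < ∫ x in μ₀..(-1 : ℝ), todaWeight a b x) ∧
      (0 < ∫ x in (b + 2*a)..(-1 : ℝ), todaWeight a b x) ∧
      (∫ x in μ₀..(-1 : ℝ), x * todaWeight a b x) /
          (∫ x in μ₀..(-1 : ℝ), todaWeight a b x) >
        (∫ x in (b + 2*a)..(-1 : ℝ), x * todaWeight a b x) /
          (∫ x in (b + 2*a)..(-1 : ℝ), todaWeight a b x) := by
  intro μ₀ hμ
  obtain ⟨h1, h2⟩ := hμ
  set w := todaWeight a b with hwdef
  have hsub1 : Set.uIcc (b + 2*a) μ₀ ⊆ Set.uIcc (b + 2*a) (-1 : ℝ) := by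
    rw [Set.uIcc_of_le h1.le, Set.uIcc_of_le hgap.le]
    exact Set.Icc_subset_Icc le_rfl h2.le
  have hsub2 : Set.uIcc μ₀ (-1 : ℝ) ⊆ Set.uIcc (b + 2*a) (-1 : ℝ) := by
    rw [Set.uIcc_of_le h2.le, Set.uIcc_of_le hgap.le]
    exact Set.Icc_subset_Icc h1.le le_rfl
  have hwA : IntervalIntegrable w volume (b + 2*a) μ₀ := hw.mono_set hsub1
  have hwB : IntervalIntegrable w volume μ₀ (-1) := hw.mono_set hsub2
  have hw1A : IntervalIntegrable (fun x => x * w x) volume (b + 2*a) μ₀ := hw1.mono_set hsub1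
  have hw1B : IntervalIntegrable (fun x => x * w x) volume μ₀ (-1) := hw1.mono_set hsub2
  have hB : 0 < ∫ x in μ₀..(-1 : ℝ), w x := by
    apply intervalIntegral.intervalIntegral_pos_of_pos_on hwB _ h2
    intro x hx
    exact todaWeight_pos ha hgap ⟨h1.trans hx.1, hx.2⟩
  have hA : 0 < ∫ x in (b + 2*a)..μ₀, w x := by
    apply intervalIntegral.intervalIntegral_pos_of_pos_on hwA _ h1
    intro x hx
    exact todaWeight_pos ha hgap ⟨hx.1, hx.2.trans h2⟩
  have hBμ : μ₀ * ∫ x in μ₀..(-1:ℝ), w x < ∫ x in μ₀..(-1:ℝ), x * w x := by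
    have hint : IntervalIntegrable (fun x => (x - μ₀) * w x) volume μ₀ (-1) := by
      have := hw1B.sub (hwB.const_mul μ₀)
      simpa [sub_mul] using this
    have hpos : 0 < ∫ x in μ₀..(-1:ℝ), (x - μ₀) * w x := by
      apply intervalIntegral.intervalIntegral_pos_of_pos_on hint _ h2
      intro x hx
      exact mul_pos (by linarith [hx.1]) (todaWeight_pos ha hgap ⟨h1.trans hx.1, hx.2⟩)
    have key : ∫ x in μ₀..(-1:ℝ), (x - μ₀) * w x
        = (∫ x in μ₀..(-1:ℝ), x * w x) - μ₀ * ∫ x in μ₀..(-1:ℝ), w x := by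
      rw [← intervalIntegral.integral_const_mul,
        ← intervalIntegral.integral_sub hw1B (hwB.const_mul μ₀)]
      congr 1; ext x; ring
    linarith [key ▸ hpos]
  have hAμ : (∫ x in (b + 2*a)..μ₀, x * w x) < μ₀ * ∫ x in (b + 2*a)..μ₀, w x := by
    have hint : IntervalIntegrable (fun x => (μ₀ - x) * w x) volume (b + 2*a) μ₀ := by
      have := (hwA.const_mul μ₀).sub hw1A
      simpa [sub_mul] using this
    have hpos : 0 < ∫ x in (b + 2*a)..μ₀, (μ₀ - x) * w x := by
      apply intervalIntegral.intervalIntegral_pos_of_pos_on hint _ h1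
      intro x hx
      exact mul_pos (by linarith [hx.2]) (todaWeight_pos ha hgap ⟨hx.1, hx.2.trans h2⟩)
    have key : ∫ x in (b + 2*a)..μ₀, (μ₀ - x) * w x
        = (μ₀ * ∫ x in (b + 2*a)..μ₀, w x) - ∫ x in (b + 2*a)..μ₀, x * w x := by
      rw [← intervalIntegral.integral_const_mul,
        ← intervalIntegral.integral_sub (hwA.const_mul μ₀) hw1A]
      congr 1; ext x; ring
    linarith [key ▸ hpos]
  have hT : (∫ x in (b + 2*a)..(-1:ℝ), w x)
      = (∫ x in (b + 2*a)..μ₀, w x) + ∫ x in μ₀..(-1:ℝ), w x :=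
    (intervalIntegral.integral_add_adjacent_intervals hwA hwB).symm
  have hT1 : (∫ x in (b + 2*a)..(-1:ℝ), x * w x)
      = (∫ x in (b + 2*a)..μ₀, x * w x) + ∫ x in μ₀..(-1:ℝ), x * w x :=
    (intervalIntegral.integral_add_adjacent_intervals hw1A hw1B).symm
  have hS : 0 < ∫ x in (b + 2*a)..(-1:ℝ), w x := by rw [hT]; linarith
  refine ⟨hB, hS, ?_⟩
  rw [gt_iff_lt, div_lt_div_iff₀ hS hB, hT, hT1]
  nlinarith [mul_pos (sub_pos.2 hAμ) hB, mul_pos (sub_pos.2 hBμ) hA]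
end

section
/- Suppose μ₁ and μ₂ are real numbers with b + 2a < μ₁ < μ₂ < −1 and ∫_{b+2a}^{−1} (λ − μ₁)(λ − μ₂)·w(λ) dλ = 0. Then there exists a unique μ₀ in the open interval (b+2a, −1) with ∫_{μ₀}^{−1} (λ − μ₁)(λ − μ₂)·w(λ) dλ = 0, and this μ₀ satisfies μ₁ < μ₀ < μ₂. -/
open MeasureTheory

lemma crossing_aux (L R : ℝ) (w : ℝ → ℝ)
    (hwpos : ∀ x ∈ Set.Ioo L R, 0 < w x)
    (μ₁ μ₂ : ℝ) (h1 : L < μ₁) (h2 : μ₁ < μ₂) (h3 : μ₂ < R)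
    (hf : IntervalIntegrable (fun x => (x - μ₁) * (x - μ₂) * w x) volume L R)
    (hzero : ∫ x in L..R, (x - μ₁) * (x - μ₂) * w x = 0) :
    (∃! μ₀ : ℝ, μ₀ ∈ Set.Ioo L R ∧
      ∫ x in μ₀..R, (x - μ₁) * (x - μ₂) * w x = 0) ∧
    (∀ μ₀ ∈ Set.Ioo L R,
      (∫ x in μ₀..R, (x - μ₁) * (x - μ₂) * w x = 0) →
      μ₁ < μ₀ ∧ μ₀ < μ₂) := by
  set f : ℝ → ℝ := fun x => (x - μ₁) * (x - μ₂) * w x with hfdef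
  have hLR : L < R := lt_trans (lt_trans h1 h2) h3
  have hμ1R : μ₁ < R := lt_trans h2 h3
  have hLμ2 : L < μ₂ := lt_trans h1 h2
  -- integrability on subintervals
  have hfsub : ∀ c d, L ≤ c → c ≤ R → L ≤ d → d ≤ R →
      IntervalIntegrable f volume c d := by
    intro c d hc1 hc2 hd1 hd2
    refine hf.mono_set (Set.uIcc_subset_uIcc ?_ ?_)
    · exact Set.mem_uIcc.2 (Or.inl ⟨hc1, hc2⟩)
    · exact Set.mem_uIcc.2 (Or.inl ⟨hd1, hd2⟩)
  -- splitting
  have hsplit : ∀ c d, L ≤ c → c ≤ d → d ≤ R →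
      (∫ x in c..R, f x) = (∫ x in c..d, f x) + ∫ x in d..R, f x := by
    intro c d hc hcd hd
    exact (intervalIntegral.integral_add_adjacent_intervals
      (hfsub c d hc (le_trans hcd hd) (le_trans hc hcd) hd)
      (hfsub d R (le_trans hc hcd) hd hLR.le le_rfl)).symm
  -- sign lemmas
  have pos1 : ∀ c d, L ≤ c → c < d → d ≤ μ₁ → 0 < ∫ x in c..d, f x := by
    intro c d hc hcd hd
    have hdR : d ≤ R := le_trans hd hμ1R.le
    refine intervalIntegral.intervalIntegral_pos_of_pos_on
      (hfsub c d hc (le_trans hcd.le hdR) (le_trans hc hcd.le) hdR) ?_ hcd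
    intro x hx
    have hwp := hwpos x ⟨lt_of_le_of_lt hc hx.1, lt_of_lt_of_le hx.2 (le_trans hd hμ1R.le)⟩
    have hx1 : x - μ₁ < 0 := by have := lt_of_lt_of_le hx.2 hd; linarith
    have hx2 : x - μ₂ < 0 := by linarith
    exact mul_pos (mul_pos_of_neg_of_neg hx1 hx2) hwp
  have neg1 : ∀ c d, μ₁ ≤ c → c < d → d ≤ μ₂ → (∫ x in c..d, f x) < 0 := by
    intro c d hc hcd hd
    have hcL : L ≤ c := le_trans h1.le hc
    have hdR : d ≤ R := le_trans hd h3.le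
    have hneg : 0 < ∫ x in c..d, (fun x => -f x) x := by
      refine intervalIntegral.intervalIntegral_pos_of_pos_on
        ((hfsub c d hcL (le_trans hcd.le hdR) (le_trans hcL hcd.le) hdR).neg) ?_ hcd
      intro x hx
      have hwp := hwpos x ⟨lt_of_le_of_lt hcL hx.1, lt_of_lt_of_le hx.2 (le_trans hd h3.le)⟩
      have hx1 : 0 < x - μ₁ := by have := lt_of_le_of_lt hc hx.1; linarith
      have hx2 : x - μ₂ < 0 := by have := lt_of_lt_of_le hx.2 hd; linarith
      have : 0 < -((x - μ₁) * (x - μ₂) * w x) := by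
        nlinarith [mul_pos (mul_pos hx1 (show (0:ℝ) < μ₂ - x by linarith)) hwp]
      simpa [hfdef] using this
    rw [intervalIntegral.integral_neg] at hneg
    linarith
  have pos2 : ∀ c d, μ₂ ≤ c → c < d → d ≤ R → 0 < ∫ x in c..d, f x := by
    intro c d hc hcd hd
    have hcL : L ≤ c := le_trans hLμ2.le hc
    refine intervalIntegral.intervalIntegral_pos_of_pos_on
      (hfsub c d hcL (le_trans hcd.le hd) (le_trans hcL hcd.le) hd) ?_ hcd
    intro x hx
    have hwp := hwpos x ⟨lt_of_le_of_lt hcL hx.1, lt_of_lt_of_le hx.2 hd⟩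
    have hx1 : 0 < x - μ₁ := by have := lt_of_le_of_lt hc hx.1; linarith
    have hx2 : 0 < x - μ₂ := by have := lt_of_le_of_lt hc hx.1; linarith
    exact mul_pos (mul_pos hx1 hx2) hwp
  -- values of F
  have hFneg : ∀ μ, L < μ → μ ≤ μ₁ → (∫ x in μ..R, f x) < 0 := by
    intro μ hμ1 hμ2
    have hs := hsplit L μ le_rfl hμ1.le (le_trans hμ2 hμ1R.le)
    have hp := pos1 L μ le_rfl hμ1 hμ2
    have := hzero
    rw [hs] at this
    linarith
  have hFpos : ∀ μ, μ₂ ≤ μ → μ < R → 0 < ∫ x in μ..R, f x := by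
    intro μ hμ1 hμ2
    exact pos2 μ R hμ1 hμ2 le_rfl
  have hmono : ∀ μ μ', μ₁ ≤ μ → μ < μ' → μ' ≤ μ₂ →
      (∫ x in μ..R, f x) < ∫ x in μ'..R, f x := by
    intro μ μ' hμ hμμ' hμ'
    have hs := hsplit μ μ' (le_trans h1.le hμ) hμμ'.le (le_trans hμ' h3.le)
    have hn := neg1 μ μ' hμ hμμ' hμ'
    rw [hs]; linarith
  -- endpoint values
  have hFμ1 : (∫ x in μ₁..R, f x) < 0 := hFneg μ₁ h1 le_rfl
  have hFμ2 : 0 < ∫ x in μ₂..R, f x := hFpos μ₂ le_rfl h3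
  -- continuity of the primitive and IVT
  have hint12 : IntegrableOn f (Set.uIcc μ₁ μ₂) volume := by
    rw [Set.uIcc_of_le h2.le]
    exact (integrableOn_Icc_iff_integrableOn_Ioc).2
      ((hfsub μ₁ μ₂ h1.le hμ1R.le hLμ2.le h3.le).1)
  have hcontG : ContinuousOn (fun μ => ∫ t in μ₁..μ, f t) (Set.uIcc μ₁ μ₂) :=
    intervalIntegral.continuousOn_primitive_interval hint12
  have hH : ∀ μ, μ₁ ≤ μ → μ ≤ μ₂ →
      (∫ x in μ..R, f x) = (∫ x in μ₁..R, f x) - ∫ t in μ₁..μ, f t := by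
    intro μ hμ1 hμ2
    have hs := hsplit μ₁ μ h1.le hμ1 (le_trans hμ2 h3.le)
    rw [hs]; ring
  have hcontH : ContinuousOn (fun μ => (∫ x in μ₁..R, f x) - ∫ t in μ₁..μ, f t)
      (Set.Icc μ₁ μ₂) := by
    rw [← Set.uIcc_of_le h2.le]
    exact (continuousOn_const.sub hcontG)
  have hivt := intermediate_value_Ioo h2.le hcontH
  have h0mem : (0:ℝ) ∈ Set.Ioo ((∫ x in μ₁..R, f x) - ∫ t in μ₁..μ₁, f t)
      ((∫ x in μ₁..R, f x) - ∫ t in μ₁..μ₂, f t) := by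
    constructor
    · simpa using hFμ1
    · rw [← hH μ₂ h2.le le_rfl]; exact hFμ2
  obtain ⟨μ₀, hμ₀mem, hμ₀val⟩ := hivt h0mem
  have hFμ₀ : (∫ x in μ₀..R, f x) = 0 := by
    rw [hH μ₀ hμ₀mem.1.le hμ₀mem.2.le]; exact hμ₀val
  -- every zero lies in (μ₁, μ₂)
  have hloc : ∀ μ ∈ Set.Ioo L R, (∫ x in μ..R, f x) = 0 → μ₁ < μ ∧ μ < μ₂ := by
    intro μ hμ hz
    constructor
    · by_contra hle
      push_neg at hle
      exact absurd hz (ne_of_lt (hFneg μ hμ.1 hle))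
    · by_contra hle
      push_neg at hle
      exact absurd hz (ne_of_gt (hFpos μ hle hμ.2))
  refine ⟨⟨μ₀, ⟨⟨lt_trans h1 hμ₀mem.1, lt_trans hμ₀mem.2 h3⟩, hFμ₀⟩, ?_⟩, hloc⟩
  intro μ ⟨hμmem, hμz⟩
  obtain ⟨ha1, ha2⟩ := hloc μ hμmem hμz
  rcases lt_trichotomy μ μ₀ with h | h | h
  · have := hmono μ μ₀ ha1.le h hμ₀mem.2.le
    rw [hμz, hFμ₀] at this; exact absurd this (lt_irrefl 0)
  · exact h
  · have := hmono μ₀ μ hμ₀mem.1.le h ha2.le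
    rw [hμz, hFμ₀] at this; exact absurd this (lt_irrefl 0)

/-- existence and uniqueness of the crossing point `μ₀` of the zero
level line of `Re g` inside the gap, lying between `μ₁` and `μ₂`. -/
theorem crossing_point_exists_unique
    (a b : ℝ) (ha : 0 < a) (hgap : b + 2*a < -1)
    (hw : IntervalIntegrable (todaWeight a b) volume (b + 2*a) (-1))
    (hw1 : IntervalIntegrable (fun x => x * todaWeight a b x) volume (b + 2*a) (-1))
    (hw2 : IntervalIntegrable (fun x => x^2 * todaWeight a b x) volume (b + 2*a) (-1))
    (μ₁ μ₂ : ℝ) (h1 : b + 2*a < μ₁) (h2 : μ₁ < μ₂) (h3 : μ₂ < -1)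
    (hzero : ∫ x in (b + 2*a)..(-1 : ℝ), (x - μ₁) * (x - μ₂) * todaWeight a b x = 0) :
    (∃! μ₀ : ℝ, μ₀ ∈ Set.Ioo (b + 2*a) (-1 : ℝ) ∧
      ∫ x in μ₀..(-1 : ℝ), (x - μ₁) * (x - μ₂) * todaWeight a b x = 0) ∧
    (∀ μ₀ ∈ Set.Ioo (b + 2*a) (-1 : ℝ),
      (∫ x in μ₀..(-1 : ℝ), (x - μ₁) * (x - μ₂) * todaWeight a b x = 0) →
      μ₁ < μ₀ ∧ μ₀ < μ₂) := by
  have hwpos : ∀ x ∈ Set.Ioo (b + 2*a) (-1 : ℝ), 0 < todaWeight a b x := by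
    intro x hx
    obtain ⟨hx1, hx2⟩ := hx
    have hA : 0 < x^2 - 1 := by nlinarith
    have hB : 0 < (x - b)^2 - 4*a^2 := by nlinarith
    exact Real.rpow_pos_of_pos (mul_pos hA hB) _
  have hf : IntervalIntegrable (fun x => (x - μ₁) * (x - μ₂) * todaWeight a b x)
      volume (b + 2*a) (-1) := by
    have hcomb := (hw2.add (hw1.const_mul (-(μ₁+μ₂)))).add (hw.const_mul (μ₁*μ₂))
    convert hcomb using 1
    funext x
    show (x - μ₁) * (x - μ₂) * todaWeight a b x = _
    ring
  exact crossing_aux (b + 2*a) (-1) (todaWeight a b) hwpos μ₁ μ₂ h1 h2 h3 hf hzero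
end

section
/- For every real ξ > 1 there exists a unique z₀ ∈ (−1, 0) such that (1/2)·(z₀ − 1/z₀) + ξ·log(−z₀) = 0. Moreover the map ξ ↦ z₀(ξ) is strictly increasing: if 1 < ξ < ξ' and z₀, z₀' ∈ (−1, 0) are the corresponding solutions, then z₀ < z₀'. -/
/-!
Substituting `z = -exp (-u)` maps `(-1, 0)` increasingly onto `(0, ∞)` and turns
`(1/2)(z - 1/z) + ξ log(-z)` into `sinh u - ξ u`. So `z` is a crossing point for `ξ` exactly when
`sinh u / u = ξ`. As `sinh` is strictly convex on `[0, ∞)` and vanishes at `0`, the secant slope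
`sinh u / u` increases strictly from `1` (at `u → 0`) to `∞`; hence each `ξ > 1` has exactly one
crossing point, and it moves to the right as `ξ` grows.
-/

open Real Set Filter Topology

lemma strictConvexOn_sinh : StrictConvexOn ℝ (Ici 0) sinh := by
  refine StrictMonoOn.strictConvexOn_of_deriv (convex_Ici 0) continuous_sinh.continuousOn ?_
  rw [Real.deriv_sinh, interior_Ici]
  exact cosh_strictMonoOn.mono Ioi_subset_Ici_self

lemma strictMonoOn_sinh_div_self : StrictMonoOn (fun u => sinh u / u) (Ioi 0) := by
  intro u hu v hv huv
  simpa only [sinh_zero, sub_zero] using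
    strictConvexOn_sinh.secant_strict_mono self_mem_Ici
      (mem_Ici.2 (le_of_lt hu)) (mem_Ici.2 (le_of_lt hv)) (ne_of_gt hu) (ne_of_gt hv) huv

lemma exists_sinh_div_self_lt {ξ : ℝ} (hξ : 1 < ξ) : ∃ u, 0 < u ∧ sinh u / u < ξ := by
  have hslope : Tendsto (fun u => sinh u / u) (𝓝[>] 0) (𝓝 1) := by
    simpa [div_eq_inv_mul] using (hasDerivAt_sinh 0).tendsto_slope_zero_right
  exact ((hslope.eventually (gt_mem_nhds hξ)).and self_mem_nhdsWithin).exists.imp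
    fun u hu => ⟨hu.2, hu.1⟩

lemma lt_sinh_div_self {ξ : ℝ} (hξ : 0 < ξ) : ξ < sinh (4 * ξ) / (4 * ξ) := by
  -- `2 sinh u > exp u - 1 ≥ u + u ^ 2 / 2`, which is `≥ 2 ξ u` as soon as `u ≥ 4 ξ - 2`
  have hexp := quadratic_le_exp_of_nonneg (by positivity : 0 ≤ 4 * ξ)
  have hexp_neg : exp (-(4 * ξ)) < 1 := Real.exp_lt_one_iff.2 (by linarith)
  rw [lt_div_iff₀ (by positivity), sinh_eq]
  nlinarith

lemma exists_sinh_div_self_eq {ξ : ℝ} (hξ : 1 < ξ) : ∃ u, 0 < u ∧ sinh u / u = ξ := by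
  obtain ⟨a, ha, haξ⟩ := exists_sinh_div_self_lt hξ
  set b := 4 * ξ
  have hb : 0 < b := by positivity
  have hξb : ξ < sinh b / b := lt_sinh_div_self (by positivity)
  have hab : uIcc a b ⊆ Ioi 0 := ordConnected_Ioi.uIcc_subset ha hb
  have hcont : ContinuousOn (fun u => sinh u / u) (uIcc a b) :=
    continuous_sinh.continuousOn.div continuousOn_id fun u hu => (hab hu).ne'
  obtain ⟨u, hu, huξ⟩ := intermediate_value_uIcc hcont (mem_uIcc_of_le haξ.le hξb.le)
  exact ⟨u, hab hu, huξ⟩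

lemma strictMonoOn_neg_log_neg : StrictMonoOn (fun z => -log (-z)) (Iio 0) := by
  intro z _ w hw hzw
  exact neg_lt_neg (log_lt_log (neg_pos.2 hw) (neg_lt_neg hzw))

lemma mapsTo_neg_log_neg : MapsTo (fun z => -log (-z)) (Ioo (-1) 0) (Ioi 0) :=
  fun _ hz => neg_pos.2 (log_neg (neg_pos.2 hz.2) (by linarith [hz.1]))

lemma half_sub_inv_eq_sinh_neg_log_neg {z : ℝ} (hz : z < 0) :
    (1/2) * (z - 1/z) = sinh (-log (-z)) := by
  have hz' : 0 < -z := neg_pos.2 hz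
  rw [sinh_eq, neg_neg, exp_neg, exp_log hz']
  field_simp
  ring

/-- The parameter `ξ` for which `z` is the crossing point, i.e. the inverse of `ξ ↦ z₀(ξ)`. -/
noncomputable def crossingParameter (z : ℝ) : ℝ := sinh (-log (-z)) / (-log (-z))

lemma phase_eq_zero_iff {ξ z : ℝ} (hz : z ∈ Ioo (-1) 0) :
    (1/2) * (z - 1/z) + ξ * log (-z) = 0 ↔ crossingParameter z = ξ := by
  have hu : 0 < -log (-z) := mapsTo_neg_log_neg hz
  rw [crossingParameter, half_sub_inv_eq_sinh_neg_log_neg hz.2, div_eq_iff hu.ne']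
  constructor <;> intro h <;> linarith

lemma strictMonoOn_crossingParameter : StrictMonoOn crossingParameter (Ioo (-1) 0) :=
  strictMonoOn_sinh_div_self.comp (strictMonoOn_neg_log_neg.mono Ioo_subset_Iio_self)
    mapsTo_neg_log_neg

lemma surjOn_crossingParameter : SurjOn crossingParameter (Ioo (-1) 0) (Ioi 1) := by
  intro ξ hξ
  obtain ⟨u, hu, huξ⟩ := exists_sinh_div_self_eq hξ
  have hexp : exp (-u) < 1 := Real.exp_lt_one_iff.2 (neg_lt_zero.2 hu)
  refine ⟨-exp (-u), ⟨neg_lt_neg hexp, neg_lt_zero.2 (exp_pos _)⟩, ?_⟩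
  rwa [crossingParameter, neg_neg, log_exp, neg_neg]

/-- for every `ξ > 1` the level line `Re Φ(·, ξ) = 0` crosses `(−1, 0)`
at a unique point `z₀(ξ)`, and `z₀(ξ)` is strictly increasing in `ξ`. -/
theorem level_line_crossing_point
    : (∀ ξ : ℝ, 1 < ξ →
        ∃! z₀ : ℝ, z₀ ∈ Set.Ioo (-1 : ℝ) 0 ∧
          (1/2) * (z₀ - 1/z₀) + ξ * Real.log (-z₀) = 0) ∧
      (∀ ξ ξ' z₀ z₀' : ℝ, 1 < ξ → ξ < ξ' →
        z₀ ∈ Set.Ioo (-1 : ℝ) 0 →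
        (1/2) * (z₀ - 1/z₀) + ξ * Real.log (-z₀) = 0 →
        z₀' ∈ Set.Ioo (-1 : ℝ) 0 →
        (1/2) * (z₀' - 1/z₀') + ξ' * Real.log (-z₀') = 0 →
        z₀ < z₀') := by
  constructor
  · intro ξ hξ
    obtain ⟨z₀, hz₀, hz₀ξ⟩ := surjOn_crossingParameter hξ
    refine ⟨z₀, ⟨hz₀, (phase_eq_zero_iff hz₀).2 hz₀ξ⟩, ?_⟩
    rintro z ⟨hz, hzero⟩
    exact strictMonoOn_crossingParameter.injOn hz hz₀
      (((phase_eq_zero_iff hz).1 hzero).trans hz₀ξ.symm)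
  · intro ξ ξ' z₀ z₀' _ hξξ' hz₀ hzero hz₀' hzero'
    rw [phase_eq_zero_iff hz₀] at hzero
    rw [phase_eq_zero_iff hz₀'] at hzero'
    rw [← strictMonoOn_crossingParameter.lt_iff_lt hz₀ hz₀', hzero, hzero']
    exact hξξ'
end

section
/- Let F₊, F₋, X, Π, g₊, g₋, Λ, U, Δ be complex numbers with F₋ ≠ 0, X ≠ 0 and F₊ = F₋·e^{iΔ}, let t ∈ ℝ and n ∈ ℤ, and suppose t·(g₊ − g₋) = −(n·Λ + t·U). Then the 2×2 matrix product [[F₋, Π²·F₋·X⁻¹·e^{−2t·g₋}], [0, F₋⁻¹]] · [[e^{t(g₊ − g₋)}, 0], [0, e^{−t(g₊ − g₋)}]] · [[F₊⁻¹, −Π²·F₊·X⁻¹·e^{−2t·g₊}], [0, F₊]] equals the diagonal matrix [[e^{−(nΛ + tU + iΔ)}, 0], [0, e^{nΛ + tU + iΔ}]]. -/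
open Complex Matrix

theorem upper_mul_diag_mul_upper {R : Type*} [CommRing R] (a a' b c c' d d' e : R) :
    !![a, b; 0, a'] * !![d, 0; 0, d'] * !![c', e; 0, c] =
      !![a * d * c', a * d * e + b * d' * c; 0, a' * d' * c] := by
  rw [mul_fin_two, mul_fin_two]
  simp

/-- Both sides equal `exp (-(s * (x + y)))`; this is what cancels the off-diagonal entry. -/
theorem exp_mul_sub_mul_exp_neg_two_mul (s x y : ℂ) :
    exp (s * (x - y)) * exp (-(2 * s * x)) = exp (-(2 * s * y)) * exp (-(s * (x - y))) := by
  rw [← exp_add, ← exp_add]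
  ring_nf

theorem mul_exp_neg_mul_inv_eq {a b c w : ℂ} (ha : a ≠ 0) (hb : b = a * exp w) :
    a * exp (-c) * b⁻¹ = exp (-(c + w)) := by
  rw [hb, neg_add, exp_add, exp_neg w]
  field_simp

theorem inv_mul_exp_mul_eq {a b c w : ℂ} (ha : a ≠ 0) (hb : b = a * exp w) :
    a⁻¹ * exp c * b = exp (c + w) := by
  rw [hb, exp_add]
  field_simp

theorem deformed_jump_is_model_jump_general
    (Fp Fm X P gp gm Λ U Δ : ℂ) (t : ℝ) (n : ℤ)
    (hFm : Fm ≠ 0)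
    (hF : Fp = Fm * Complex.exp (Complex.I * Δ))
    (hg : (t : ℂ) * (gp - gm) = -((n : ℂ) * Λ + (t : ℂ) * U)) :
    !![Fm, P^2 * Fm * X⁻¹ * Complex.exp (-(2*(t : ℂ)*gm)); 0, Fm⁻¹] *
      !![Complex.exp ((t : ℂ) * (gp - gm)), 0;
         0, Complex.exp (-((t : ℂ) * (gp - gm)))] *
      !![Fp⁻¹, -(P^2 * Fp * X⁻¹ * Complex.exp (-(2*(t : ℂ)*gp))); 0, Fp] =
    !![Complex.exp (-((n : ℂ) * Λ + (t : ℂ) * U + Complex.I * Δ)), 0;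
       0, Complex.exp ((n : ℂ) * Λ + (t : ℂ) * U + Complex.I * Δ)] := by
  have off_diag : Fm * exp (t * (gp - gm)) * -(P ^ 2 * Fp * X⁻¹ * exp (-(2 * t * gp))) +
      P ^ 2 * Fm * X⁻¹ * exp (-(2 * t * gm)) * exp (-(t * (gp - gm))) * Fp = 0 := by
    linear_combination (-(P ^ 2 * Fm * Fp * X⁻¹)) * exp_mul_sub_mul_exp_neg_two_mul t gp gm
  rw [upper_mul_diag_mul_upper, off_diag, hg, neg_neg, mul_exp_neg_mul_inv_eq hFm hF,
    inv_mul_exp_mul_eq hFm hF]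

/-- the key matrix identity of the second deformation step: the
deformed jump matrix on the gap equals the constant diagonal model jump matrix. -/
theorem deformed_jump_is_model_jump
    (Fp Fm X P gp gm Λ U Δ : ℂ) (t : ℝ) (n : ℤ)
    (hFm : Fm ≠ 0) (hX : X ≠ 0)
    (hF : Fp = Fm * Complex.exp (Complex.I * Δ))
    (hg : (t : ℂ) * (gp - gm) = -((n : ℂ) * Λ + (t : ℂ) * U)) :
    !![Fm, P^2 * Fm * X⁻¹ * Complex.exp (-(2*(t : ℂ)*gm)); 0, Fm⁻¹] *
      !![Complex.exp ((t : ℂ) * (gp - gm)), 0;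
         0, Complex.exp (-((t : ℂ) * (gp - gm)))] *
      !![Fp⁻¹, -(P^2 * Fp * X⁻¹ * Complex.exp (-(2*(t : ℂ)*gp))); 0, Fp] =
    !![Complex.exp (-((n : ℂ) * Λ + (t : ℂ) * U + Complex.I * Δ)), 0;
       0, Complex.exp ((n : ℂ) * Λ + (t : ℂ) * U + Complex.I * Δ)] :=
  deformed_jump_is_model_jump_general Fp Fm X P gp gm Λ U Δ t n hFm hF hg
end
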